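/- arXiv:1202.1233 — 4 statements merged into one kernel-verified Lean document; each statement's English description precedes it below -/
import Mathlib

section
/- For every φ ∈ X_J (with complex or real entries), ‖φ‖_∞ ≤ √2 · ‖φ‖₂^{1/2} · ‖D₊φ‖₂^{1/2}. -/
/-!
Telescoping `‖φ_j‖² - ‖φ_1‖²` and bounding each increment `‖φ_{k+1}‖² - ‖φ_k‖²` by
`(‖φ_{k+1}‖ + ‖φ_k‖) ‖φ_{k+1} - φ_k‖` gives, after Cauchy–Schwarz,
`‖φ_j‖⁴ ≤ (∑ (‖φ_{k+1}‖ + ‖φ_k‖)²) (∑ ‖φ_{k+1} - φ_k‖²) ≤ 4 ‖φ‖₂² ‖D₊φ‖₂²`.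
The mesh `h` cancels in the product `‖φ‖₂² ‖D₊φ‖₂²`.
-/

open Finset

namespace Finset

variable {M : Type*} [AddCommMonoid M] {g : ℕ → M} {m n : ℕ}

theorem sum_Ico_succ_left_of_eq_zero (hg : g m = 0) (n : ℕ) :
    ∑ k ∈ Ico (m + 1) n, g k = ∑ k ∈ Ico m n, g k :=
  sum_subset (Ico_subset_Ico_left m.le_succ) fun k hk hk' => by
    obtain rfl : k = m := by simp only [mem_Ico] at hk hk'; omega
    exact hg

theorem sum_Ico_succ_right_of_eq_zero (hg : g n = 0) (m : ℕ) :
    ∑ k ∈ Ico m (n + 1), g k = ∑ k ∈ Ico m n, g k :=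
  (sum_subset (Ico_subset_Ico_right n.le_succ) fun k hk hk' => by
    obtain rfl : k = n := by simp only [mem_Ico] at hk hk'; omega
    exact hg).symm

end Finset

section NormedSequence

variable {E : Type*} [SeminormedAddCommGroup E] {f : ℕ → E} {m n : ℕ}

theorem sq_norm_succ_sub_sq_norm_le (f : ℕ → E) (k : ℕ) :
    ‖f (k + 1)‖ ^ 2 - ‖f k‖ ^ 2 ≤ (‖f (k + 1)‖ + ‖f k‖) * ‖f (k + 1) - f k‖ := by
  rw [sq_sub_sq]
  exact mul_le_mul_of_nonneg_left (norm_sub_norm_le _ _) (by positivity)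

theorem sq_norm_le_sum_Ico_norm_add_mul_norm_sub (hm : f m = 0) {j : ℕ} (hmj : m ≤ j)
    (hjn : j ≤ n) :
    ‖f j‖ ^ 2 ≤ ∑ k ∈ Ico m n, (‖f (k + 1)‖ + ‖f k‖) * ‖f (k + 1) - f k‖ :=
  calc ‖f j‖ ^ 2 = ∑ k ∈ Ico m j, (‖f (k + 1)‖ ^ 2 - ‖f k‖ ^ 2) := by
        rw [sum_Ico_sub (fun k => ‖f k‖ ^ 2) hmj, hm, norm_zero]; ring
    _ ≤ ∑ k ∈ Ico m j, (‖f (k + 1)‖ + ‖f k‖) * ‖f (k + 1) - f k‖ :=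
        sum_le_sum fun k _ => sq_norm_succ_sub_sq_norm_le f k
    _ ≤ ∑ k ∈ Ico m n, (‖f (k + 1)‖ + ‖f k‖) * ‖f (k + 1) - f k‖ :=
        sum_le_sum_of_subset_of_nonneg (Ico_subset_Ico_right hjn) fun _ _ _ => by positivity

theorem sum_Ico_sq_norm_add_le (hm : f m = 0) (hn : f n = 0) :
    ∑ k ∈ Ico m n, (‖f (k + 1)‖ + ‖f k‖) ^ 2 ≤ 4 * ∑ k ∈ Ico (m + 1) n, ‖f k‖ ^ 2 := by
  have hshift : ∑ k ∈ Ico m n, ‖f (k + 1)‖ ^ 2 = ∑ k ∈ Ico (m + 1) n, ‖f k‖ ^ 2 := by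
    rw [sum_Ico_add' (fun k => ‖f k‖ ^ 2),
      sum_Ico_succ_right_of_eq_zero (g := fun k => ‖f k‖ ^ 2) (by simp [hn])]
  have hdrop : ∑ k ∈ Ico m n, ‖f k‖ ^ 2 = ∑ k ∈ Ico (m + 1) n, ‖f k‖ ^ 2 :=
    (sum_Ico_succ_left_of_eq_zero (g := fun k => ‖f k‖ ^ 2) (by simp [hm]) n).symm
  calc ∑ k ∈ Ico m n, (‖f (k + 1)‖ + ‖f k‖) ^ 2
      ≤ ∑ k ∈ Ico m n, 2 * (‖f (k + 1)‖ ^ 2 + ‖f k‖ ^ 2) := sum_le_sum fun _ _ => add_sq_le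
    _ = 4 * ∑ k ∈ Ico (m + 1) n, ‖f k‖ ^ 2 := by
        rw [← mul_sum, sum_add_distrib, hshift, hdrop]; ring

theorem norm_pow_four_le_of_eq_zero_of_eq_zero (hm : f m = 0) (hn : f n = 0) {j : ℕ}
    (hmj : m ≤ j) (hjn : j ≤ n) :
    ‖f j‖ ^ 4 ≤ 4 * (∑ k ∈ Ico (m + 1) n, ‖f k‖ ^ 2) * ∑ k ∈ Ico m n, ‖f (k + 1) - f k‖ ^ 2 :=
  calc ‖f j‖ ^ 4 = (‖f j‖ ^ 2) ^ 2 := by ring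
    _ ≤ (∑ k ∈ Ico m n, (‖f (k + 1)‖ + ‖f k‖) * ‖f (k + 1) - f k‖) ^ 2 := by
        gcongr; exact sq_norm_le_sum_Ico_norm_add_mul_norm_sub hm hmj hjn
    _ ≤ (∑ k ∈ Ico m n, (‖f (k + 1)‖ + ‖f k‖) ^ 2) * ∑ k ∈ Ico m n, ‖f (k + 1) - f k‖ ^ 2 :=
        sum_mul_sq_le_sq_mul_sq _ _ _
    _ ≤ _ := by gcongr; exact sum_Ico_sq_norm_add_le hm hn

end NormedSequence

theorem Real.le_sqrt_two_mul_sqrt_sqrt_mul_sqrt_sqrt {x a b : ℝ} (hx : 0 ≤ x) (ha : 0 ≤ a)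
    (hb : 0 ≤ b) (h : x ^ 4 ≤ 4 * a * b) : x ≤ √2 * √√a * √√b := by
  have hrhs : √√(4 * a * b) = √2 * √√a * √√b := by
    rw [Real.sqrt_mul (by positivity) b, Real.sqrt_mul zero_le_four a,
      show √4 = 2 by rw [show (4 : ℝ) = 2 ^ 2 by norm_num, Real.sqrt_sq zero_le_two],
      Real.sqrt_mul (by positivity), Real.sqrt_mul zero_le_two]
  rw [← hrhs, Real.le_sqrt hx (by positivity), Real.le_sqrt (by positivity) (by positivity)]
  linarith

/-- Discrete Gagliardo–Nirenberg inequality (80) of Lemma 1.1: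
for every `φ ∈ X_J`, `‖φ‖_∞ ≤ √2 ‖φ‖₂^{1/2} ‖D₊φ‖₂^{1/2}`. -/
theorem discrete_gagliardo_nirenberg
    (J : ℕ) (hJ : 5 ≤ J) (L h : ℝ) (hL : 0 < L) (hh : h = L / (J + 1))
    (φ : ℕ → ℂ)
    (h1 : φ 1 = 0) (hJ0 : φ J = 0) :
    (Finset.Icc 2 (J - 1)).sup' (Finset.nonempty_Icc.mpr (by omega))
        (fun j => ‖φ j‖) ≤
      Real.sqrt 2
        * Real.sqrt (Real.sqrt (∑ j ∈ Finset.Icc 2 (J - 1),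
            h * ‖φ j‖ ^ 2))
        * Real.sqrt (Real.sqrt (∑ j ∈ Finset.Icc 1 (J - 1),
            h * ‖(φ (j + 1) - φ j) / (h : ℂ)‖ ^ 2)) := by
  have hpos : 0 < h := hh ▸ by positivity
  have hIcc (a : ℕ) : Icc a (J - 1) = Ico a J :=
    Icc_sub_one_right_eq_Ico_of_not_isMin
      (by simp only [isMin_iff_eq_bot, Nat.bot_eq_zero]; omega) a
  have hdiff (k : ℕ) : h * ‖(φ (k + 1) - φ k) / (h : ℂ)‖ ^ 2 = h⁻¹ * ‖φ (k + 1) - φ k‖ ^ 2 := by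
    rw [norm_div, Complex.norm_real, Real.norm_of_nonneg hpos.le]
    field_simp
  simp only [hIcc, hdiff, ← mul_sum]
  refine sup'_le _ _ fun j hj => ?_
  obtain ⟨hj2, hjJ⟩ := mem_Ico.mp hj
  refine Real.le_sqrt_two_mul_sqrt_sqrt_mul_sqrt_sqrt (norm_nonneg _) (by positivity)
    (by positivity) ?_
  calc ‖φ j‖ ^ 4 ≤ 4 * (∑ k ∈ Ico 2 J, ‖φ k‖ ^ 2) * ∑ k ∈ Ico 1 J, ‖φ (k + 1) - φ k‖ ^ 2 :=
        norm_pow_four_le_of_eq_zero_of_eq_zero h1 hJ0 (by omega) hjJ.le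
    _ = 4 * (h * ∑ k ∈ Ico 2 J, ‖φ k‖ ^ 2) * (h⁻¹ * ∑ k ∈ Ico 1 J, ‖φ (k + 1) - φ k‖ ^ 2) := by
        field_simp
end

section
/- Let α, β ∈ ℝ, let g : ℝ → ℝ be any (real-valued) function, and let T > 0. Suppose u : [0,T] → ℂ^{J+2} and v : [0,T] → ℝ^{J+2} are differentiable, with u(t), v(t) ∈ X_J for every t ∈ [0,T], and satisfy the semidiscrete Schrödinger equation i u_j′(t) + Δʰu_j(t) = β|u_j(t)|² u_j(t) + α g(v_j(t)) u_j(t) for all j = 2,…,J−1 and all t ∈ [0,T]. Then the discrete L² norm is conserved: ‖u(t)‖₂ = ‖u(0)‖₂ for all t ∈ [0,T]. -/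
/-!
Differentiating the mass, `d/dt Σ |u_j|² = 2 Σ Re (u_j' ū_j)`. The equation gives
`u_j' = i Δʰu_j − i c_j u_j` with `c_j = β|u_j|² + α g(v_j)` real, so the nonlinear terms drop out
of the real part and `Re (u_j' ū_j) = −Im (h²Δʰu_j ū_j) / h²`. Summing over `j`, these imaginary
parts telescope to the fluxes `Im (u_{j+1} ū_j)` at the two ends, which vanish because
`u_1 = u_J = 0`.
-/

open Finset Complex ComplexConjugate

/-- `h² Δʰ z_j`. -/
def secondDiff (z : ℕ → ℂ) (j : ℕ) : ℂ := z (j + 1) - 2 * z j + z (j - 1)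

lemma im_secondDiff_mul_conj (z : ℕ → ℂ) (j : ℕ) :
    (secondDiff z j * conj (z j)).im
      = (z (j + 1) * conj (z j)).im - (z j * conj (z (j - 1))).im := by
  simp only [secondDiff, mul_im, sub_im, add_im, sub_re, add_re, conj_re, conj_im, re_ofNat,
    im_ofNat, mul_re]
  ring

lemma sum_im_secondDiff_mul_conj_eq_zero (z : ℕ → ℂ) (J : ℕ) (h1 : z 1 = 0) (hJ : z J = 0) :
    ∑ j ∈ Icc 2 (J - 1), (secondDiff z j * conj (z j)).im = 0 := by
  rcases lt_or_ge (J - 1) 2 with hJ2 | hJ2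
  · rw [Icc_eq_empty_of_lt hJ2, sum_empty]
  · have hflux := sum_Icc_sub hJ2 fun j => (z j * conj (z (j - 1))).im
    simp only [Nat.add_sub_cancel] at hflux
    simp only [im_secondDiff_mul_conj, hflux, Nat.sub_add_cancel (by omega : 1 ≤ J), hJ, h1]
    simp

lemma re_mul_conj_eq_neg_im_of_I_mul_add_eq_ofReal_mul {z z' d : ℂ} {c : ℝ}
    (hz : I * z' + d = c * z) : (z' * conj z).re = -(d * conj z).im := by
  have hz' : z' = I * d - I * c * z := by linear_combination (-I) * hz + z' * I_mul_I
  rw [hz', sub_mul, sub_re, mul_assoc I (c : ℂ), mul_assoc I, mul_assoc, I_mul_re, I_mul_re,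
    mul_assoc, mul_conj, ← ofReal_mul, ofReal_im, neg_zero, sub_zero]

lemma HasDerivWithinAt.sum_norm_sq {ι : Type*} {u u' : ℝ → ι → ℂ} {s : Set ℝ} {t : ℝ}
    (S : Finset ι) (hu : ∀ j ∈ S, HasDerivWithinAt (fun s => u s j) (u' t j) s t) :
    HasDerivWithinAt (fun s => ∑ j ∈ S, ‖u s j‖ ^ 2)
      (∑ j ∈ S, 2 * (u' t j * conj (u t j)).re) s t := by
  simpa only [Complex.inner] using HasDerivWithinAt.fun_sum fun j hj => (hu j hj).norm_sq

lemma eq_of_hasDerivWithinAt_Icc_eq_zero {E : Type*} [NormedAddCommGroup E] [NormedSpace ℝ E]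
    {f : ℝ → E} {a b : ℝ} (hf : ∀ x ∈ Set.Icc a b, HasDerivWithinAt f 0 (Set.Icc a b) x) :
    ∀ x ∈ Set.Icc a b, f x = f a :=
  constant_of_has_deriv_right_zero (fun x hx => (hf x hx).continuousWithinAt) fun x hx =>
    (hf x (Set.Ico_subset_Icc_self hx)).mono_of_mem_nhdsWithin (Icc_mem_nhdsGE_of_mem hx)

theorem semidiscrete_schrodinger_mass_conservation_general
    (J : ℕ) (h : ℝ)
    (α β T : ℝ) (g : ℝ → ℝ)
    (u : ℝ → ℕ → ℂ) (u' : ℝ → ℕ → ℂ) (v : ℝ → ℕ → ℝ)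
    (hu : ∀ j : ℕ, ∀ t ∈ Set.Icc (0 : ℝ) T,
      HasDerivWithinAt (fun s => u s j) (u' t j) (Set.Icc (0 : ℝ) T) t)
    (hubc : ∀ t ∈ Set.Icc (0 : ℝ) T,
      u t 0 = 0 ∧ u t 1 = 0 ∧ u t J = 0 ∧ u t (J + 1) = 0)
    (heq : ∀ t ∈ Set.Icc (0 : ℝ) T, ∀ j ∈ Finset.Icc 2 (J - 1),
      Complex.I * u' t j + (u t (j + 1) - 2 * u t j + u t (j - 1)) / (h : ℂ) ^ 2
        = (β : ℂ) * (‖u t j‖ : ℂ) ^ 2 * u t j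
          + (α : ℂ) * (g (v t j) : ℂ) * u t j) :
    ∀ t ∈ Set.Icc (0 : ℝ) T,
      Real.sqrt (∑ j ∈ Finset.Icc 2 (J - 1), h * ‖u t j‖ ^ 2)
        = Real.sqrt (∑ j ∈ Finset.Icc 2 (J - 1), h * ‖u 0 j‖ ^ 2) := by
  have hmass : ∀ t ∈ Set.Icc 0 T,
      HasDerivWithinAt (fun s => ∑ j ∈ Icc 2 (J - 1), ‖u s j‖ ^ 2) 0 (Set.Icc 0 T) t := by
    intro t ht
    obtain ⟨-, h1, hJ, -⟩ := hubc t ht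
    have hre : ∀ j ∈ Icc 2 (J - 1),
        (u' t j * conj (u t j)).re = -(h ^ 2)⁻¹ * (secondDiff (u t) j * conj (u t j)).im := by
      intro j hj
      have hdiv : secondDiff (u t) j / (h : ℂ) ^ 2 = secondDiff (u t) j * ((h ^ 2)⁻¹ : ℝ) := by
        push_cast; ring
      rw [re_mul_conj_eq_neg_im_of_I_mul_add_eq_ofReal_mul (z' := u' t j)
        (d := secondDiff (u t) j / (h : ℂ) ^ 2) (c := β * ‖u t j‖ ^ 2 + α * g (v t j))
        (by push_cast [secondDiff]; linear_combination heq t ht j hj), hdiv, mul_right_comm,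
        im_mul_ofReal]
      ring
    convert HasDerivWithinAt.sum_norm_sq _ fun j _ => hu j t ht using 1
    rw [sum_congr rfl fun j hj => by rw [hre j hj], ← mul_sum, ← mul_sum,
      sum_im_secondDiff_mul_conj_eq_zero _ _ h1 hJ, mul_zero, mul_zero]
  intro t ht
  rw [← mul_sum, ← mul_sum, eq_of_hasDerivWithinAt_Icc_eq_zero hmass t ht]

/-- Conservation of the discrete `L²` norm for the semidiscrete Schrödinger equation
`i u_j′ + Δʰ u_j = β|u_j|²u_j + α g(v_j) u_j` on `X_J`:
`‖u(t)‖₂ = ‖u(0)‖₂` for all `t ∈ [0,T]`. -/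
theorem semidiscrete_schrodinger_mass_conservation
    (J : ℕ) (hJ : 5 ≤ J) (L h : ℝ) (hL : 0 < L) (hh : h = L / (J + 1))
    (α β T : ℝ) (hT : 0 < T) (g : ℝ → ℝ)
    (u : ℝ → ℕ → ℂ) (u' : ℝ → ℕ → ℂ) (v : ℝ → ℕ → ℝ) (v' : ℝ → ℕ → ℝ)
    (hu : ∀ j : ℕ, ∀ t ∈ Set.Icc (0 : ℝ) T,
      HasDerivWithinAt (fun s => u s j) (u' t j) (Set.Icc (0 : ℝ) T) t)
    (hv : ∀ j : ℕ, ∀ t ∈ Set.Icc (0 : ℝ) T,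
      HasDerivWithinAt (fun s => v s j) (v' t j) (Set.Icc (0 : ℝ) T) t)
    (hubc : ∀ t ∈ Set.Icc (0 : ℝ) T,
      u t 0 = 0 ∧ u t 1 = 0 ∧ u t J = 0 ∧ u t (J + 1) = 0)
    (hvbc : ∀ t ∈ Set.Icc (0 : ℝ) T,
      v t 0 = 0 ∧ v t 1 = 0 ∧ v t J = 0 ∧ v t (J + 1) = 0)
    (heq : ∀ t ∈ Set.Icc (0 : ℝ) T, ∀ j ∈ Finset.Icc 2 (J - 1),
      Complex.I * u' t j + (u t (j + 1) - 2 * u t j + u t (j - 1)) / (h : ℂ) ^ 2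
        = (β : ℂ) * (‖u t j‖ : ℂ) ^ 2 * u t j
          + (α : ℂ) * (g (v t j) : ℂ) * u t j) :
    ∀ t ∈ Set.Icc (0 : ℝ) T,
      Real.sqrt (∑ j ∈ Finset.Icc 2 (J - 1), h * ‖u t j‖ ^ 2)
        = Real.sqrt (∑ j ∈ Finset.Icc 2 (J - 1), h * ‖u 0 j‖ ^ 2) :=
  semidiscrete_schrodinger_mass_conservation_general J h α β T g u u' v hu hubc heq
end

section
/- Let γ ∈ ℝ, let f, g : ℝ → ℝ be differentiable with f(0) = 0, and let T > 0. Suppose u : [0,T] → ℂ^{J+2} and v : [0,T] → ℝ^{J+2} are differentiable, with u(t), v(t) ∈ X_J for every t, and satisfy the semidiscrete KdV equation v_j′(t) + (D³v(t))_j + (D₀ f(v(t)))_j = γ (D₀ (g′(v(t))|u(t)|²))_j for all j = 2,…,J−1 and all t ∈ [0,T], where f(v), g′(v)|u|² are applied componentwise. Then for every t, (1/2)·(d/dt)‖v(t)‖₂² = Σ_{j=2}^{J−1} h f(v_j(t)) (D₀v(t))_j − γ Σ_{j=2}^{J−1} h g′(v_j(t)) |u_j(t)|² (D₀v(t))_j.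 -/
/-!
Differentiating `Σ h v_j²` gives `2h Σ v_j v_j'`; substituting the equation for `v_j'` leaves
sums of the form `Σ v_j D³v_j` and `Σ v_j D₀w_j`. On `X_J` both difference operators are
skew-adjoint: summation by parts is a telescoping sum whose boundary terms vanish because the
grid functions vanish at `0, 1, J, J + 1`. Hence `Σ v_j D³v_j = 0` and
`Σ v_j D₀w_j = -Σ w_j D₀v_j`.
-/

open Finset

section SummationByParts

variable {R : Type*} [CommRing R] {J : ℕ} {a b : ℕ → R}

theorem sum_Ico_mul_shift_one (ha : a 1 = 0) (hb : b J = 0) :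
    ∑ j ∈ Ico 2 J, a j * b (j + 1) = ∑ j ∈ Ico 2 J, a (j - 1) * b j := by
  rcases le_or_gt 2 J with hJ | hJ
  · rw [← sub_eq_zero, ← sum_sub_distrib]
    simpa [ha, hb] using sum_Ico_sub (fun j => a (j - 1) * b j) hJ
  · simp [Ico_eq_empty_of_le hJ.le]

theorem sum_Ico_mul_shift_two (ha₀ : a 0 = 0) (ha₁ : a 1 = 0) (hb : b J = 0)
    (hb' : b (J + 1) = 0) :
    ∑ j ∈ Ico 2 J, a j * b (j + 2) = ∑ j ∈ Ico 2 J, a (j - 2) * b j := by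
  calc ∑ j ∈ Ico 2 J, a j * b (j + 2)
      = ∑ j ∈ Ico 2 J, a (j - 1) * b (j + 1) :=
        sum_Ico_mul_shift_one (b := fun i => b (i + 1)) ha₁ hb'
    _ = ∑ j ∈ Ico 2 J, a (j - 1 - 1) * b j :=
        sum_Ico_mul_shift_one (a := fun i => a (i - 1)) ha₀ hb
    _ = ∑ j ∈ Ico 2 J, a (j - 2) * b j := by simp only [Nat.sub_sub]

end SummationByParts

section DifferenceOperators

variable {K : Type*} [Field K]

def centralDiff (h : K) (z : ℕ → K) (j : ℕ) : K :=
  (z (j + 1) - z (j - 1)) / (2 * h)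

def thirdDiff (h : K) (z : ℕ → K) (j : ℕ) : K :=
  (z (j + 2) - 2 * z (j + 1) + 2 * z (j - 1) - z (j - 2)) / (2 * h ^ 3)

variable {J : ℕ} {h : K} {a b : ℕ → K}

theorem sum_Ico_mul_centralDiff (ha₁ : a 1 = 0) (haJ : a J = 0) (hb₁ : b 1 = 0)
    (hbJ : b J = 0) :
    ∑ j ∈ Ico 2 J, a j * centralDiff h b j = -∑ j ∈ Ico 2 J, b j * centralDiff h a j := by
  simp only [centralDiff, mul_div_assoc', ← sum_div, ← neg_div, mul_sub, sum_sub_distrib,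
    sum_Ico_mul_shift_one ha₁ hbJ, sum_Ico_mul_shift_one hb₁ haJ]
  simp only [mul_comm (b _) (a _)]
  ring

theorem sum_Ico_mul_thirdDiff_self (ha₀ : a 0 = 0) (ha₁ : a 1 = 0) (haJ : a J = 0)
    (haJ' : a (J + 1) = 0) :
    ∑ j ∈ Ico 2 J, a j * thirdDiff h a j = 0 := by
  simp only [thirdDiff, mul_div_assoc', ← sum_div, mul_sub, mul_add, mul_left_comm (a _) 2,
    sum_sub_distrib, sum_add_distrib, ← mul_sum, sum_Ico_mul_shift_one ha₁ haJ,
    sum_Ico_mul_shift_two ha₀ ha₁ haJ haJ']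
  simp only [mul_comm (a (_ - 1)) (a _), mul_comm (a (_ - 2)) (a _)]
  ring

theorem sum_mul_eq_of_kdv {γ : K} {a d F b : ℕ → K} (ha₀ : a 0 = 0) (ha₁ : a 1 = 0)
    (haJ : a J = 0) (haJ' : a (J + 1) = 0) (hF₁ : F 1 = 0) (hFJ : F J = 0) (hb₁ : b 1 = 0)
    (hbJ : b J = 0)
    (hd : ∀ j ∈ Ico 2 J, d j + thirdDiff h a j + centralDiff h F j = γ * centralDiff h b j) :
    ∑ j ∈ Ico 2 J, a j * d j
      = ∑ j ∈ Ico 2 J, F j * centralDiff h a j - γ * ∑ j ∈ Ico 2 J, b j * centralDiff h a j := by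
  have hd' : ∀ j ∈ Ico 2 J, a j * d j
      = γ * (a j * centralDiff h b j) - a j * thirdDiff h a j - a j * centralDiff h F j := by
    intro j hj
    rw [eq_sub_of_add_eq (eq_sub_of_add_eq (hd j hj))]
    ring
  rw [sum_congr rfl hd', sum_sub_distrib, sum_sub_distrib, ← mul_sum,
    sum_Ico_mul_thirdDiff_self ha₀ ha₁ haJ haJ', sum_Ico_mul_centralDiff ha₁ haJ hb₁ hbJ,
    sum_Ico_mul_centralDiff ha₁ haJ hF₁ hFJ]
  ring

end DifferenceOperators

theorem semidiscrete_kdv_l2_identity_general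
    (J : ℕ) (h : ℝ) (γ T : ℝ) (f g' : ℝ → ℝ) (hf0 : f 0 = 0)
    (u : ℝ → ℕ → ℂ) (v : ℝ → ℕ → ℝ) (v' : ℝ → ℕ → ℝ)
    (hv : ∀ j : ℕ, ∀ t ∈ Set.Icc (0 : ℝ) T,
      HasDerivWithinAt (fun s => v s j) (v' t j) (Set.Icc (0 : ℝ) T) t)
    (hubc : ∀ t ∈ Set.Icc (0 : ℝ) T,
      u t 0 = 0 ∧ u t 1 = 0 ∧ u t J = 0 ∧ u t (J + 1) = 0)
    (hvbc : ∀ t ∈ Set.Icc (0 : ℝ) T,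
      v t 0 = 0 ∧ v t 1 = 0 ∧ v t J = 0 ∧ v t (J + 1) = 0)
    (heq : ∀ t ∈ Set.Icc (0 : ℝ) T, ∀ j ∈ Finset.Icc 2 (J - 1),
      v' t j
        + (v t (j + 2) - 2 * v t (j + 1) + 2 * v t (j - 1) - v t (j - 2)) / (2 * h ^ 3)
        + (f (v t (j + 1)) - f (v t (j - 1))) / (2 * h)
      = γ * ((g' (v t (j + 1)) * ‖u t (j + 1)‖ ^ 2
              - g' (v t (j - 1)) * ‖u t (j - 1)‖ ^ 2) / (2 * h))) :
    ∀ t ∈ Set.Icc (0 : ℝ) T,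
      HasDerivWithinAt (fun s => ∑ j ∈ Finset.Icc 2 (J - 1), h * (v s j) ^ 2)
        (2 * ((∑ j ∈ Finset.Icc 2 (J - 1),
                h * f (v t j) * ((v t (j + 1) - v t (j - 1)) / (2 * h)))
              - γ * ∑ j ∈ Finset.Icc 2 (J - 1),
                h * g' (v t j) * ‖u t j‖ ^ 2
                  * ((v t (j + 1) - v t (j - 1)) / (2 * h))))
        (Set.Icc (0 : ℝ) T) t := by
  intro t ht
  obtain ⟨-, hu₁, huJ, -⟩ := hubc t ht
  obtain ⟨hv₀, hv₁, hvJ, hvJ'⟩ := hvbc t ht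
  have hIcc : Icc 2 (J - 1) = Ico 2 J := by ext; simp only [mem_Icc, mem_Ico]; omega
  have hkdv := sum_mul_eq_of_kdv (d := v' t) (F := fun j => f (v t j))
    (b := fun j => g' (v t j) * ‖u t j‖ ^ 2) hv₀ hv₁ hvJ hvJ' (by simp [hv₁, hf0])
    (by simp [hvJ, hf0]) (by simp [hu₁]) (by simp [huJ]) fun j hj => heq t ht j (hIcc ▸ hj)
  have hderiv := HasDerivWithinAt.fun_sum fun j (_ : j ∈ Icc 2 (J - 1)) =>
    ((hv j t ht).pow 2).const_mul h
  refine hderiv.congr_deriv ?_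
  rw [hIcc]
  calc ∑ j ∈ Ico 2 J, h * ((2 : ℕ) * v t j ^ (2 - 1) * v' t j)
      = 2 * h * ∑ j ∈ Ico 2 J, v t j * v' t j := by
        rw [mul_sum]; exact sum_congr rfl fun j _ => by push_cast; ring
    _ = _ := by
        rw [hkdv]
        simp only [centralDiff, mul_sub, mul_sum]
        congr 1 <;> exact sum_congr rfl fun j _ => by ring

/-- Identity (360) in the proof of Lemma 4.1: for solutions of the semidiscrete
truncated KdV equation `v_j′ + D³v_j + D₀ f(v)_j = γ D₀(g′(v)|u|²)_j` on `X_J`,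
`(1/2) d/dt ‖v(t)‖₂² = Σ_j h f(v_j) D₀v_j − γ Σ_j h g′(v_j)|u_j|² D₀v_j`. -/
theorem semidiscrete_kdv_l2_identity
    (J : ℕ) (hJ : 5 ≤ J) (L h : ℝ) (hL : 0 < L) (hh : h = L / (J + 1))
    (γ T : ℝ) (hT : 0 < T)
    (f g f' g' : ℝ → ℝ)
    (hf : ∀ s : ℝ, HasDerivAt f (f' s) s) (hf0 : f 0 = 0)
    (hg : ∀ s : ℝ, HasDerivAt g (g' s) s)
    (u : ℝ → ℕ → ℂ) (u' : ℝ → ℕ → ℂ) (v : ℝ → ℕ → ℝ) (v' : ℝ → ℕ → ℝ)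
    (hu : ∀ j : ℕ, ∀ t ∈ Set.Icc (0 : ℝ) T,
      HasDerivWithinAt (fun s => u s j) (u' t j) (Set.Icc (0 : ℝ) T) t)
    (hv : ∀ j : ℕ, ∀ t ∈ Set.Icc (0 : ℝ) T,
      HasDerivWithinAt (fun s => v s j) (v' t j) (Set.Icc (0 : ℝ) T) t)
    (hubc : ∀ t ∈ Set.Icc (0 : ℝ) T,
      u t 0 = 0 ∧ u t 1 = 0 ∧ u t J = 0 ∧ u t (J + 1) = 0)
    (hvbc : ∀ t ∈ Set.Icc (0 : ℝ) T,
      v t 0 = 0 ∧ v t 1 = 0 ∧ v t J = 0 ∧ v t (J + 1) = 0)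
    (heq : ∀ t ∈ Set.Icc (0 : ℝ) T, ∀ j ∈ Finset.Icc 2 (J - 1),
      v' t j
        + (v t (j + 2) - 2 * v t (j + 1) + 2 * v t (j - 1) - v t (j - 2)) / (2 * h ^ 3)
        + (f (v t (j + 1)) - f (v t (j - 1))) / (2 * h)
      = γ * ((g' (v t (j + 1)) * ‖u t (j + 1)‖ ^ 2
              - g' (v t (j - 1)) * ‖u t (j - 1)‖ ^ 2) / (2 * h))) :
    ∀ t ∈ Set.Icc (0 : ℝ) T,
      HasDerivWithinAt (fun s => ∑ j ∈ Finset.Icc 2 (J - 1), h * (v s j) ^ 2)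
        (2 * ((∑ j ∈ Finset.Icc 2 (J - 1),
                h * f (v t j) * ((v t (j + 1) - v t (j - 1)) / (2 * h)))
              - γ * ∑ j ∈ Finset.Icc 2 (J - 1),
                h * g' (v t j) * ‖u t j‖ ^ 2
                  * ((v t (j + 1) - v t (j - 1)) / (2 * h))))
        (Set.Icc (0 : ℝ) T) t :=
  semidiscrete_kdv_l2_identity_general J h γ T f g' hf0 u v v' hv hubc hvbc heq
end

section
/- Let L > 0 and α, β, γ ∈ ℝ. Let u : [0,L] → ℂ and v : [0,L] → ℝ be continuously differentiable with u(0) = u(L) = 0 and v(0) = v(L) = 0, let f : ℝ → ℝ be C¹ and g : ℝ → ℝ be C². Define m(x) = −i α g(v(x)) u(x) − i β |u(x)|² u(x) and n(x) = −(f∘v)′(x) + γ (g′(v)|u|²)′(x) (derivatives in x). Then 2γ · Im ∫₀ᴸ m(x) · conj(u′(x)) dx = −α ∫₀ᴸ v(x) n(x) dx; both sides equal αγ ∫₀ᴸ g′(v(x)) v′(x) |u(x)|² dx. -/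
/-!
Write `m = -i (α g(v) + β |u|²) u`, so that `2 Im (m ū') = -(α g(v) + β |u|²) (|u|²)'`.
Since `u` vanishes at both ends, integrating by parts kills the `β` term (it is `-β (|u|⁴)'/2`)
and turns the `α` term into `α ∫ g'(v) v' |u|²`. On the KdV side, `v (f ∘ v)' = F'(v) v'` for a
primitive `F` of `t ↦ t f'(t)`, which integrates to `F(v L) - F(v 0) = 0`, and one integration by
parts against `v(0) = v(L) = 0` gives `∫ v (g'(v) |u|²)' = -∫ g'(v) v' |u|²`.
-/

open Set intervalIntegral Complex
open MeasureTheory (volume)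
open scoped ComplexConjugate InnerProductSpace Interval

section

variable {a b : ℝ}

theorem integral_eq_sub_of_hasDerivWithinAt_uIcc {E : Type*} [NormedAddCommGroup E]
    [NormedSpace ℝ E] [CompleteSpace E] {F F' : ℝ → E}
    (hF : ∀ x ∈ [[a, b]], HasDerivWithinAt F (F' x) [[a, b]] x)
    (hF' : IntervalIntegrable F' volume a b) :
    ∫ x in a..b, F' x = F b - F a :=
  integral_eq_sub_of_hasDeriv_right (fun x hx ↦ (hF x hx).continuousWithinAt)
    (fun x hx ↦ (hF x (mem_Icc_of_Ioo hx) |>.hasDerivAt (Icc_mem_nhds hx.1 hx.2)).hasDerivWithinAt)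
    hF'

theorem integral_mul_deriv_eq_neg_integral_deriv_mul {A : Type*} [NormedRing A]
    [NormedAlgebra ℝ A] [CompleteSpace A] {p q p' q' : ℝ → A}
    (hp : ∀ x ∈ [[a, b]], HasDerivWithinAt p (p' x) [[a, b]] x)
    (hq : ∀ x ∈ [[a, b]], HasDerivWithinAt q (q' x) [[a, b]] x)
    (hp' : IntervalIntegrable p' volume a b) (hq' : IntervalIntegrable q' volume a b)
    (hpq : p a * q a = p b * q b) :
    ∫ x in a..b, p x * q' x = -∫ x in a..b, p' x * q x := by
  rw [integral_mul_deriv_eq_deriv_mul_of_hasDerivWithinAt hp hq hp' hq', hpq, sub_self, zero_sub]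

theorem integral_mul_deriv_self_eq_zero {p p' : ℝ → ℝ}
    (hp : ∀ x ∈ [[a, b]], HasDerivWithinAt p (p' x) [[a, b]] x)
    (hp' : IntervalIntegrable p' volume a b) (hpab : p a ^ 2 = p b ^ 2) :
    ∫ x in a..b, p x * p' x = 0 := by
  have h := integral_mul_deriv_eq_neg_integral_deriv_mul hp hp hp' hp' (by simpa [sq] using hpab)
  simp_rw [mul_comm (p' _)] at h
  linarith

theorem integral_comp_mul_deriv_eq_zero {v v' h : ℝ → ℝ}
    (hv : ∀ x ∈ [[a, b]], HasDerivWithinAt v (v' x) [[a, b]] x)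
    (hv' : ContinuousOn v' [[a, b]]) (hh : Continuous h) (hvab : v a = v b) :
    ∫ x in a..b, h (v x) * v' x = 0 := by
  have hH (s : ℝ) : HasDerivAt (fun s ↦ ∫ t in (0 : ℝ)..s, h t) (h s) s :=
    (hh.integral_hasStrictDerivAt 0 s).hasDerivAt
  rw [integral_eq_sub_of_hasDerivWithinAt_uIcc
    (fun x hx ↦ (hH (v x)).comp_hasDerivWithinAt x (hv x hx))
    ((hh.comp_continuousOn fun x hx ↦ (hv x hx).continuousWithinAt).mul hv').intervalIntegrable,
    Function.comp_apply, Function.comp_apply, hvab, sub_self]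

theorem UniqueDiffOn.eqOn_of_hasDerivWithinAt {s : Set ℝ} {F f₁ f₂ : ℝ → ℝ}
    (hs : UniqueDiffOn ℝ s) (h₁ : ∀ x ∈ s, HasDerivWithinAt F (f₁ x) s x)
    (h₂ : ∀ x ∈ s, HasDerivWithinAt F (f₂ x) s x) : EqOn f₁ f₂ s :=
  fun x hx ↦ (hs x hx).eq_deriv s (h₁ x hx) (h₂ x hx)

theorem Complex.im_neg_I_mul_ofReal_mul_mul_conj (r : ℝ) (z w : ℂ) :
    (-I * r * z * conj w).im = -(r * ⟪z, w⟫_ℝ) := by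
  simp only [neg_mul, neg_im, mul_im, mul_re, I_re, I_im, ofReal_re, ofReal_im, conj_re, conj_im,
    Complex.inner]
  ring

theorem two_mul_im_integral_schrodinger_nonlinearity_mul_conj_deriv (α β : ℝ)
    {u u' : ℝ → ℂ} {v v' g g' : ℝ → ℝ}
    (hu : ∀ x ∈ [[a, b]], HasDerivWithinAt u (u' x) [[a, b]] x) (hu' : ContinuousOn u' [[a, b]])
    (hv : ∀ x ∈ [[a, b]], HasDerivWithinAt v (v' x) [[a, b]] x) (hv' : ContinuousOn v' [[a, b]])
    (hua : u a = 0) (hub : u b = 0)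
    (hg : ∀ s, HasDerivAt g (g' s) s) (hg' : Continuous g') :
    2 * (∫ x in a..b, (-I * α * (g (v x) : ℂ) * u x - I * β * (‖u x‖ : ℂ) ^ 2 * u x)
        * conj (u' x)).im
      = α * ∫ x in a..b, g' (v x) * v' x * ‖u x‖ ^ 2 := by
  have hu_c : ContinuousOn u [[a, b]] := fun x hx ↦ (hu x hx).continuousWithinAt
  have hv_c : ContinuousOn v [[a, b]] := fun x hx ↦ (hv x hx).continuousWithinAt
  have hg_c : Continuous g := continuous_iff_continuousAt.2 fun s ↦ (hg s).continuousAt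
  set φ' : ℝ → ℝ := fun x ↦ 2 * ⟪u x, u' x⟫_ℝ
  have hφ (x : ℝ) (hx : x ∈ [[a, b]]) : HasDerivWithinAt (‖u ·‖ ^ 2) (φ' x) [[a, b]] x :=
    (hu x hx).norm_sq
  have hφ' : ContinuousOn φ' [[a, b]] := continuousOn_const.mul (hu_c.inner hu')
  have hgv : ∫ x in a..b, g (v x) * φ' x = -∫ x in a..b, g' (v x) * v' x * ‖u x‖ ^ 2 :=
    integral_mul_deriv_eq_neg_integral_deriv_mul
      (fun x hx ↦ (hg (v x)).comp_hasDerivWithinAt x (hv x hx)) hφ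
      ((hg'.comp_continuousOn hv_c).mul hv').intervalIntegrable hφ'.intervalIntegrable
      (by simp [hua, hub])
  have hφφ : ∫ x in a..b, ‖u x‖ ^ 2 * φ' x = 0 :=
    integral_mul_deriv_self_eq_zero hφ hφ'.intervalIntegrable (by simp [hua, hub])
  have hpt (x : ℝ) : 2 * ((-I * α * (g (v x) : ℂ) * u x - I * β * (‖u x‖ : ℂ) ^ 2 * u x)
      * conj (u' x)).im = -α * (g (v x) * φ' x) - β * (‖u x‖ ^ 2 * φ' x) := by
    rw [show (-I * α * (g (v x) : ℂ) * u x - I * β * (‖u x‖ : ℂ) ^ 2 * u x) * conj (u' x)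
        = -I * ↑(α * g (v x) + β * ‖u x‖ ^ 2) * u x * conj (u' x) by push_cast; ring,
      im_neg_I_mul_ofReal_mul_mul_conj]
    ring
  have hint : IntervalIntegrable (fun x ↦ (-I * α * (g (v x) : ℂ) * u x
      - I * β * (‖u x‖ : ℂ) ^ 2 * u x) * conj (u' x)) volume a b := by
    apply ContinuousOn.intervalIntegrable
    fun_prop
  calc _ = ∫ x in a..b, 2 * ((-I * α * (g (v x) : ℂ) * u x - I * β * (‖u x‖ : ℂ) ^ 2 * u x)
          * conj (u' x)).im := by
        rw [integral_const_mul, ← imCLM_apply, ← imCLM.intervalIntegral_comp_comm hint]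
        rfl
    _ = ∫ x in a..b, (-α * (g (v x) * φ' x) - β * (‖u x‖ ^ 2 * φ' x)) :=
        integral_congr fun x _ ↦ hpt x
    _ = α * ∫ x in a..b, g' (v x) * v' x * ‖u x‖ ^ 2 := by
        rw [integral_sub, integral_const_mul, integral_const_mul, hgv, hφφ]
        · ring
        all_goals exact ContinuousOn.intervalIntegrable (by fun_prop)

theorem integral_mul_kdv_nonlinearity (γ : ℝ) (hab : a ≠ b)
    {u u' : ℝ → ℂ} {v v' f f' g' g'' w₁ w₂ : ℝ → ℝ}
    (hu : ∀ x ∈ [[a, b]], HasDerivWithinAt u (u' x) [[a, b]] x) (hu' : ContinuousOn u' [[a, b]])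
    (hv : ∀ x ∈ [[a, b]], HasDerivWithinAt v (v' x) [[a, b]] x) (hv' : ContinuousOn v' [[a, b]])
    (hva : v a = 0) (hvb : v b = 0)
    (hf : ∀ s, HasDerivAt f (f' s) s) (hf' : Continuous f')
    (hg' : ∀ s, HasDerivAt g' (g'' s) s) (hg'' : Continuous g'')
    (hw₁ : ∀ x ∈ [[a, b]], HasDerivWithinAt (fun y ↦ f (v y)) (w₁ x) [[a, b]] x)
    (hw₂ : ∀ x ∈ [[a, b]], HasDerivWithinAt (fun y ↦ g' (v y) * ‖u y‖ ^ 2) (w₂ x) [[a, b]] x) :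
    ∫ x in a..b, v x * (-w₁ x + γ * w₂ x)
      = -γ * ∫ x in a..b, g' (v x) * v' x * ‖u x‖ ^ 2 := by
  have hs : UniqueDiffOn ℝ [[a, b]] := uniqueDiffOn_uIcc hab
  have hu_c : ContinuousOn u [[a, b]] := fun x hx ↦ (hu x hx).continuousWithinAt
  have hv_c : ContinuousOn v [[a, b]] := fun x hx ↦ (hv x hx).continuousWithinAt
  have hg'_c : Continuous g' := continuous_iff_continuousAt.2 fun s ↦ (hg' s).continuousAt
  have hw₁_eq : EqOn w₁ (fun x ↦ f' (v x) * v' x) [[a, b]] :=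
    hs.eqOn_of_hasDerivWithinAt hw₁ fun x hx ↦ (hf (v x)).comp_hasDerivWithinAt x (hv x hx)
  have hw₂_eq : EqOn w₂
      (fun x ↦ g'' (v x) * v' x * ‖u x‖ ^ 2 + g' (v x) * (2 * ⟪u x, u' x⟫_ℝ)) [[a, b]] :=
    hs.eqOn_of_hasDerivWithinAt hw₂ fun x hx ↦
      ((hg' (v x)).comp_hasDerivWithinAt x (hv x hx)).mul (hu x hx).norm_sq
  have hw₁_c : ContinuousOn w₁ [[a, b]] := ContinuousOn.congr (by fun_prop) hw₁_eq
  have hw₂_c : ContinuousOn w₂ [[a, b]] := ContinuousOn.congr (by fun_prop) hw₂_eq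
  have h₁ : ∫ x in a..b, v x * w₁ x = 0 := calc
    _ = ∫ x in a..b, (fun t ↦ t * f' t) (v x) * v' x :=
        integral_congr fun x hx ↦ by rw [hw₁_eq hx]; ring
    _ = 0 := integral_comp_mul_deriv_eq_zero hv hv' (by fun_prop : Continuous fun t ↦ t * f' t)
        (hva.trans hvb.symm)
  have h₂ : ∫ x in a..b, v x * w₂ x = -∫ x in a..b, g' (v x) * v' x * ‖u x‖ ^ 2 := by
    rw [integral_mul_deriv_eq_neg_integral_deriv_mul hv hw₂ hv'.intervalIntegrable
      hw₂_c.intervalIntegrable (by simp [hva, hvb])]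
    exact congrArg _ (integral_congr fun x _ ↦ by ring)
  calc _ = -(∫ x in a..b, v x * w₁ x) + γ * ∫ x in a..b, v x * w₂ x := by
        simp only [mul_add, mul_neg, mul_left_comm (v _) γ]
        rw [integral_add, integral_neg, integral_const_mul]
        all_goals exact ContinuousOn.intervalIntegrable (by fun_prop)
    _ = _ := by rw [h₁, h₂]; ring

end

/-- The key identity `2γ·Im(m, ∂ₓu) = −α(v, n)` in the proof of the conservation
of `Q^M` in Proposition 3.1, where `m = −iαg(v)u − iβ|u|²u` and
`n = −(f∘v)′ + γ(g′(v)|u|²)′` are the nonlinear terms of the Duhamel formulation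
of the truncated Schrödinger–KdV system; both sides equal
`αγ ∫₀ᴸ g′(v) v′ |u|² dx`. -/
theorem duhamel_nonlinear_terms_identity
    (L α β γ : ℝ) (hL : 0 < L)
    (u u' : ℝ → ℂ) (v v' : ℝ → ℝ)
    (f f' g g' g'' : ℝ → ℝ)
    (hu : ∀ x ∈ Set.Icc (0 : ℝ) L,
      HasDerivWithinAt u (u' x) (Set.Icc (0 : ℝ) L) x)
    (hu' : ContinuousOn u' (Set.Icc (0 : ℝ) L))
    (hv : ∀ x ∈ Set.Icc (0 : ℝ) L,
      HasDerivWithinAt v (v' x) (Set.Icc (0 : ℝ) L) x)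
    (hv' : ContinuousOn v' (Set.Icc (0 : ℝ) L))
    (hu0 : u 0 = 0) (huL : u L = 0) (hv0 : v 0 = 0) (hvL : v L = 0)
    (hf : ∀ s : ℝ, HasDerivAt f (f' s) s) (hf' : Continuous f')
    (hg : ∀ s : ℝ, HasDerivAt g (g' s) s)
    (hg' : ∀ s : ℝ, HasDerivAt g' (g'' s) s) (hg'' : Continuous g'')
    (m : ℝ → ℂ) (n w₁ w₂ : ℝ → ℝ)
    (hm : ∀ x : ℝ, m x
      = -Complex.I * (α : ℂ) * (g (v x) : ℂ) * u x
        - Complex.I * (β : ℂ) * (‖u x‖ : ℂ) ^ 2 * u x)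
    (hw₁ : ∀ x ∈ Set.Icc (0 : ℝ) L,
      HasDerivWithinAt (fun y => f (v y)) (w₁ x) (Set.Icc (0 : ℝ) L) x)
    (hw₂ : ∀ x ∈ Set.Icc (0 : ℝ) L,
      HasDerivWithinAt (fun y => g' (v y) * ‖u y‖ ^ 2) (w₂ x)
        (Set.Icc (0 : ℝ) L) x)
    (hn : ∀ x : ℝ, n x = -w₁ x + γ * w₂ x) :
    2 * γ * (∫ x in (0 : ℝ)..L, m x * (starRingEnd ℂ) (u' x)).im
      = -α * ∫ x in (0 : ℝ)..L, v x * n x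
    ∧ 2 * γ * (∫ x in (0 : ℝ)..L, m x * (starRingEnd ℂ) (u' x)).im
      = α * γ * ∫ x in (0 : ℝ)..L, g' (v x) * v' x * ‖u x‖ ^ 2 := by
  rw [← uIcc_of_le hL.le] at hu hu' hv hv' hw₁ hw₂
  have hS := two_mul_im_integral_schrodinger_nonlinearity_mul_conj_deriv α β hu hu' hv hv' hu0 huL
    hg (continuous_iff_continuousAt.2 fun s ↦ (hg' s).continuousAt)
  have hK := integral_mul_kdv_nonlinearity γ hL.ne hu hu' hv hv' hv0 hvL hf hf' hg' hg'' hw₁ hw₂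
  simp only [← hm] at hS
  simp only [← hn] at hK
  constructor
  · linear_combination γ * hS + α * hK
  · linear_combination γ * hS
end
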